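/- With the notation of the almost equitable partition and cellwise averaging operator $P$ as above, for $p = 2$ one also has $\|D(f - Pf)\|_{\ell^2_a}^2 \le \|Df\|_{\ell^2_a}^2$ for every $f$ in the form domain, where $Dh(e) = h(e_+) - h(e_-)$; i.e., the null space of $P$ is invariant under the energy comparison. -/

import Mathlib

/-!
Group the edges by the unordered pair of cells containing their endpoints. Inside a cell `P f`
is constant, so `D (f - P f) = D f` there. On the edges between two cells `i ≠ j`, oriented from
`i` to `j`, `D (P f)` is the constant `t = m i - m j` (difference of the cell means), and double
counting each such edge at its endpoint in cell `i`, resp. `j`, the almost equitable property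
shows that `t` is the `a`-weighted mean of `D f` over these edges. Subtracting the weighted mean
lowers a weighted sum of squares: `∑ a (g - t)² = ∑ a g² - t² ∑ a`.
-/

theorem summable_mul_of_summable_mul_sq {X : Type*} {d f : X → ℝ} (hd : ∀ x, 0 ≤ d x)
    (h₁ : Summable d) (h₂ : Summable fun x => d x * f x ^ 2) : Summable fun x => f x * d x :=
  (h₁.add h₂).of_norm_bounded fun x => by
    rw [Real.norm_eq_abs, abs_mul, abs_of_nonneg (hd x)]
    nlinarith [hd x, sq_abs (f x), mul_nonneg (hd x) (sq_nonneg (|f x| - 1))]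

theorem tsum_ofReal_mul_sub_sq_le {X : Type*} {a g : X → ℝ} {W t : ℝ} (ha : ∀ x, 0 ≤ a x)
    (hW : HasSum a W) (hmean : HasSum (fun x => a x * g x) (t * W))
    (hg : Summable fun x => a x * g x ^ 2) :
    ∑' x, ENNReal.ofReal (a x * (g x - t) ^ 2) ≤ ∑' x, ENNReal.ofReal (a x * g x ^ 2) := by
  have hvar : HasSum (fun x => a x * (g x - t) ^ 2)
      ((∑' x, a x * g x ^ 2) - 2 * t * (t * W) + t ^ 2 * W) :=
    ((hg.hasSum.sub (hmean.mul_left (2 * t))).add (hW.mul_left (t ^ 2))).congr_fun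
      fun x => by ring
  rw [← ENNReal.ofReal_tsum_of_nonneg (fun x => mul_nonneg (ha x) (sq_nonneg _)) hvar.summable,
    ← ENNReal.ofReal_tsum_of_nonneg (fun x => mul_nonneg (ha x) (sq_nonneg _)) hg, hvar.tsum_eq]
  exact ENNReal.ofReal_le_ofReal (by nlinarith [hW.nonneg ha, sq_nonneg t])

section CrossEdges

variable {V E I : Type*} (ep em : E → V) (cell : V → I)

def crossEdges (z : Sym2 I) : Set E := (fun e => s(cell (ep e), cell (em e))) ⁻¹' {z}

def incidentEdges (v : V) (j : I) : Set E :=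
  {e | (ep e = v ∧ cell (em e) = j) ∨ (em e = v ∧ cell (ep e) = j)}

-- Outside `crossEdges s(i, _)` the fallback value `em e` is junk.
def endpointIn [DecidableEq I] (i : I) (e : E) : V := if cell (ep e) = i then ep e else em e

variable {ep em cell} {e : E} {v : V} {i j : I}

theorem mem_crossEdges_mk : e ∈ crossEdges ep em cell s(i, j) ↔
    (cell (ep e) = i ∧ cell (em e) = j) ∨ (cell (ep e) = j ∧ cell (em e) = i) :=
  Sym2.eq_iff

theorem crossEdges_swap : crossEdges ep em cell s(j, i) = crossEdges ep em cell s(i, j) := by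
  rw [Sym2.eq_swap]

theorem cell_eq_of_mem_crossEdges_diag (he : e ∈ crossEdges ep em cell s(i, i)) :
    cell (ep e) = cell (em e) := by
  rcases mem_crossEdges_mk.1 he with ⟨h₁, h₂⟩ | ⟨h₁, h₂⟩ <;> rw [h₁, h₂]

theorem mem_crossEdges_of_mem_incidentEdges (hv : cell v = i)
    (he : e ∈ incidentEdges ep em cell v j) : e ∈ crossEdges ep em cell s(i, j) := by
  rcases he with ⟨rfl, h⟩ | ⟨rfl, h⟩
  · exact mem_crossEdges_mk.2 (Or.inl ⟨hv, h⟩)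
  · exact mem_crossEdges_mk.2 (Or.inr ⟨h, hv⟩)

variable [DecidableEq I]

theorem cell_endpointIn (he : e ∈ crossEdges ep em cell s(i, j)) :
    cell (endpointIn ep em cell i e) = i := by
  unfold endpointIn
  split_ifs with h
  · exact h
  · rcases mem_crossEdges_mk.1 he with ⟨h₁, -⟩ | ⟨-, h₂⟩
    exacts [absurd h₁ h, h₂]

theorem endpointIn_mem_incidentEdges (hij : i ≠ j) (he : e ∈ crossEdges ep em cell s(i, j)) :
    e ∈ incidentEdges ep em cell (endpointIn ep em cell i e) j := by
  rcases mem_crossEdges_mk.1 he with ⟨h₁, h₂⟩ | ⟨h₁, h₂⟩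
  · exact Or.inl ⟨(if_pos h₁).symm, h₂⟩
  · exact Or.inr ⟨(if_neg (h₁ ▸ hij.symm)).symm, h₁⟩

theorem endpointIn_eq_of_mem_incidentEdges (hij : i ≠ j) (hv : cell v = i)
    (he : e ∈ incidentEdges ep em cell v j) : endpointIn ep em cell i e = v := by
  rcases he with ⟨rfl, -⟩ | ⟨rfl, h⟩
  · exact if_pos hv
  · exact if_neg (h ▸ hij.symm)

theorem sub_sq_eq_endpointIn (hij : i ≠ j) (he : e ∈ crossEdges ep em cell s(i, j))
    (h : V → ℝ) : (h (ep e) - h (em e)) ^ 2 =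
      (h (endpointIn ep em cell i e) - h (endpointIn ep em cell j e)) ^ 2 := by
  rcases mem_crossEdges_mk.1 he with ⟨h₁, -⟩ | ⟨h₁, -⟩
  · simp [endpointIn, h₁, hij]
  · simp [endpointIn, h₁, hij.symm]
    ring

def crossEdgesEquivSigma (hij : i ≠ j) :
    crossEdges ep em cell s(i, j) ≃ Σ v : {v // cell v = i}, incidentEdges ep em cell v j where
  toFun e := ⟨⟨endpointIn ep em cell i e, cell_endpointIn e.2⟩, e,
    endpointIn_mem_incidentEdges hij e.2⟩
  invFun x := ⟨x.2, mem_crossEdges_of_mem_incidentEdges x.1.2 x.2.2⟩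
  left_inv _ := rfl
  right_inv x :=
    Sigma.subtype_ext (Subtype.ext (endpointIn_eq_of_mem_incidentEdges hij x.1.2 x.2.2)) rfl

end CrossEdges

section CrossEdgeSums

variable {V E I : Type*} {ep em : E → V} {cell : V → I} {a : E → ℝ} {i j : I}

theorem summable_crossEdges (hij : i ≠ j)
    (h₁ : Summable fun e : {e : E // cell (ep e) = i ∧ cell (em e) = j} => a e)
    (h₂ : Summable fun e : {e : E // cell (ep e) = j ∧ cell (em e) = i} => a e) :
    Summable fun e : crossEdges ep em cell s(i, j) => a e := by
  have hunion : crossEdges ep em cell s(i, j) =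
      {e | cell (ep e) = i ∧ cell (em e) = j} ∪ {e | cell (ep e) = j ∧ cell (em e) = i} :=
    Set.ext fun _ => mem_crossEdges_mk
  have hdisj : Disjoint {e | cell (ep e) = i ∧ cell (em e) = j}
      {e | cell (ep e) = j ∧ cell (em e) = i} :=
    Set.disjoint_left.2 fun _ h h' => hij (h.1.symm.trans h'.1)
  rw [hunion]
  exact (h₁.hasSum.add_disjoint hdisj h₂.hasSum).summable

variable [DecidableEq I]

theorem hasSum_mul_endpointIn (hij : i ≠ j) (ha : ∀ e, 0 ≤ a e)
    (hedge : Summable fun e : crossEdges ep em cell s(i, j) => a e) {d : V → ℝ} {c : ℝ}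
    (hc : ∀ v, cell v = i → ∑' e : incidentEdges ep em cell v j, a e = c * d v)
    {φ : V → ℝ} (hφ : Summable fun v : {v // cell v = i} => φ v * d v) :
    HasSum (fun e : crossEdges ep em cell s(i, j) => a e * φ (endpointIn ep em cell i e))
      (c * ∑' v : {v // cell v = i}, φ v * d v) := by
  set s : (Σ v : {v // cell v = i}, incidentEdges ep em cell v j) → ℝ := fun x => a x.2 * φ x.1
  have hfib (v : {v // cell v = i}) : Summable fun e : incidentEdges ep em cell v j => a e :=
    hedge.comp_injective (Set.inclusion_injective fun _ =>
      mem_crossEdges_of_mem_incidentEdges v.2)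
  have hfibsum (v : {v // cell v = i}) : HasSum (fun e => s ⟨v, e⟩) (c * (φ v * d v)) := by
    rw [show c * (φ v * d v) = (∑' e : incidentEdges ep em cell v j, a e) * φ v by
      rw [hc v v.2]; ring]
    exact (hfib v).hasSum.mul_right _
  have hs : Summable s := by
    rw [← summable_abs_iff, summable_sigma_of_nonneg fun _ => abs_nonneg _]
    refine ⟨fun v => (hfibsum v).summable.abs, (hφ.mul_left c).abs.congr fun v => ?_⟩
    have hcd : 0 ≤ c * d v := hc v v.2 ▸ tsum_nonneg fun e => ha e
    rw [show c * (φ v * d v) = c * d v * φ v by ring, abs_mul (c * d v), abs_of_nonneg hcd]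
    simp only [s, abs_mul, abs_of_nonneg (ha _), tsum_mul_right, hc v v.2]
  have hsum : HasSum s (c * ∑' v : {v // cell v = i}, φ v * d v) := by
    rw [← (hs.hasSum.sigma hfibsum).unique (hφ.hasSum.mul_left c)]
    exact hs.hasSum
  rw [← (crossEdgesEquivSigma hij).symm.hasSum_iff]
  exact hsum.congr_fun fun x =>
    congrArg (a x.2 * φ ·) (endpointIn_eq_of_mem_incidentEdges hij x.1.2 x.2.2)

end CrossEdgeSums

noncomputable def cellMean {V I : Type*} (cell : V → I) (d f : V → ℝ) (i : I) : ℝ :=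
  (∑' w : {w // cell w = i}, f w * d w) / ∑' w : {w // cell w = i}, d w

section EnergyComparison

variable {V E I : Type*} {ep em : E → V} {cell : V → I} {a : E → ℝ} {d f : V → ℝ} {i j : I}

theorem cellMean_mul_tsum (hd : ∀ v, 0 ≤ d v) (hdi : Summable fun v : {v // cell v = i} => d v) :
    cellMean cell d f i * ∑' v : {v // cell v = i}, d v = ∑' v : {v // cell v = i}, f v * d v := by
  rcases eq_or_ne (∑' v : {v // cell v = i}, d v) 0 with h | h
  · have hd0 : (fun v : {v // cell v = i} => d v) = 0 :=
      (hasSum_zero_iff_of_nonneg fun v : {v // cell v = i} => hd v).1 (h ▸ hdi.hasSum)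
    simp [funext_iff.1 hd0]
  · exact div_mul_cancel₀ _ h

theorem tsum_ofReal_energy_sub_cellMean_le (hij : i ≠ j) (ha : ∀ e, 0 ≤ a e)
    (hd : ∀ v, 0 ≤ d v) (hedge : Summable fun e : crossEdges ep em cell s(i, j) => a e)
    {cij cji : ℝ}
    (hcij : ∀ v, cell v = i → ∑' e : incidentEdges ep em cell v j, a e = cij * d v)
    (hcji : ∀ v, cell v = j → ∑' e : incidentEdges ep em cell v i, a e = cji * d v)
    (hdi : Summable fun v : {v // cell v = i} => d v)
    (hdj : Summable fun v : {v // cell v = j} => d v)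
    (hfi : Summable fun v : {v // cell v = i} => f v * d v)
    (hfj : Summable fun v : {v // cell v = j} => f v * d v)
    (hf : Summable fun e : crossEdges ep em cell s(i, j) => a e * (f (ep e) - f (em e)) ^ 2) :
    ∑' e : crossEdges ep em cell s(i, j), ENNReal.ofReal (a e *
        ((f (ep e) - cellMean cell d f (cell (ep e))) -
          (f (em e) - cellMean cell d f (cell (em e)))) ^ 2)
      ≤ ∑' e : crossEdges ep em cell s(i, j), ENNReal.ofReal (a e * (f (ep e) - f (em e)) ^ 2) := by
  classical
  have hedge' : Summable fun e : crossEdges ep em cell s(j, i) => a e := by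
    rwa [crossEdges_swap]
  have hWi := hasSum_mul_endpointIn hij ha hedge hcij (φ := 1) (by simpa using hdi)
  have hWj := hasSum_mul_endpointIn hij.symm ha hedge' hcji (φ := 1) (by simpa using hdj)
  have hFi := hasSum_mul_endpointIn hij ha hedge hcij hfi
  have hFj := hasSum_mul_endpointIn hij.symm ha hedge' hcji hfj
  rw [crossEdges_swap] at hWj hFj
  simp only [Pi.one_apply, mul_one, one_mul] at hWi hWj
  have hmean : HasSum (fun e : crossEdges ep em cell s(i, j) =>
      a e * (f (endpointIn ep em cell i e) - f (endpointIn ep em cell j e)))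
      ((cellMean cell d f i - cellMean cell d f j) * (cij * ∑' v : {v // cell v = i}, d v)) := by
    rw [show (cellMean cell d f i - cellMean cell d f j) * (cij * ∑' v : {v // cell v = i}, d v)
        = cij * (∑' v : {v // cell v = i}, f v * d v) - cji * ∑' v : {v // cell v = j}, f v * d v
      by linear_combination cij * cellMean_mul_tsum (f := f) hd hdi
        - cji * cellMean_mul_tsum (f := f) hd hdj - cellMean cell d f j * hWi.unique hWj]
    exact (hFi.sub hFj).congr_fun fun e => mul_sub _ _ _
  calc _ = ∑' e : crossEdges ep em cell s(i, j), ENNReal.ofReal (a e *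
        ((f (endpointIn ep em cell i e) - f (endpointIn ep em cell j e)) -
          (cellMean cell d f i - cellMean cell d f j)) ^ 2) := by
        refine tsum_congr fun e => ?_
        have he' : (e : E) ∈ crossEdges ep em cell s(j, i) := by rw [crossEdges_swap]; exact e.2
        rw [sub_sq_eq_endpointIn hij e.2 fun v => f v - cellMean cell d f (cell v),
          cell_endpointIn e.2, cell_endpointIn he', sub_sub_sub_comm]
    _ ≤ ∑' e : crossEdges ep em cell s(i, j), ENNReal.ofReal (a e *
        (f (endpointIn ep em cell i e) - f (endpointIn ep em cell j e)) ^ 2) :=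
      tsum_ofReal_mul_sub_sq_le (fun e => ha e) hWi hmean
        (hf.congr fun e => by rw [sub_sq_eq_endpointIn hij e.2 f])
    _ = _ := tsum_congr fun e => by rw [sub_sq_eq_endpointIn hij e.2 f]

end EnergyComparison

theorem stmt8_general (V E I : Type*)
    (ep em : E → V)
    (a : E → ℝ) (ha : ∀ e, 0 < a e) (d : V → ℝ) (hd : ∀ v, 0 < d v)
    (cell : V → I)
    (halmost : ∀ i j : I, i ≠ j → ∃ c : ℝ, 0 ≤ c ∧ ∀ v : V, cell v = i →
      (∑' e : {e : E // (ep e = v ∧ cell (em e) = j) ∨ (em e = v ∧ cell (ep e) = j)}, a e.1)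
        = c * d v)
    (hcellfin : ∀ i : I, Summable (fun v : {v : V // cell v = i} => d v.1))
    (hedgefin : ∀ i j : I,
      Summable (fun e : {e : E // cell (ep e) = i ∧ cell (em e) = j} => a e.1))
    (f : V → ℝ) (hf2 : Summable (fun v => d v * (f v) ^ 2))
    (hfE : Summable (fun e => a e * (f (ep e) - f (em e)) ^ 2)) :
    let P : V → ℝ := fun v =>
      (∑' w : {w : V // cell w = cell v}, f w.1 * d w.1) /
        (∑' w : {w : V // cell w = cell v}, d w.1)
    ∑' e : E, ENNReal.ofReal
        (a e * ((f (ep e) - P (ep e)) - (f (em e) - P (em e))) ^ 2)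
      ≤ ∑' e : E, ENNReal.ofReal (a e * (f (ep e) - f (em e)) ^ 2) := by
  intro P
  have ha₀ : ∀ e, 0 ≤ a e := fun e => (ha e).le
  have hd₀ : ∀ v, 0 ≤ d v := fun v => (hd v).le
  have hfd (i : I) : Summable fun v : {v // cell v = i} => f v * d v :=
    summable_mul_of_summable_mul_sq (fun v => hd₀ v) (hcellfin i) (hf2.subtype _)
  rw [← ENNReal.tsum_fiberwise _ fun e => s(cell (ep e), cell (em e)),
    ← ENNReal.tsum_fiberwise _ fun e => s(cell (ep e), cell (em e))]
  refine ENNReal.tsum_le_tsum fun z => ?_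
  induction z using Sym2.ind with | _ i j => ?_
  rcases eq_or_ne i j with rfl | hij
  · refine (tsum_congr fun e => ?_).le
    dsimp only [P]
    rw [cell_eq_of_mem_crossEdges_diag e.2, sub_sub_sub_cancel_right]
  · obtain ⟨cij, -, hcij⟩ := halmost i j hij
    obtain ⟨cji, -, hcji⟩ := halmost j i hij.symm
    exact tsum_ofReal_energy_sub_cellMean_le hij ha₀ hd₀
      (summable_crossEdges hij (hedgefin i j) (hedgefin j i)) hcij hcji (hcellfin i)
      (hcellfin j) (hfd i) (hfd j) (hfE.subtype _)

/-- For `p = 2` and an almost equitable partition, also the null space of the cellwise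
averaging operator `P` satisfies the energy comparison:
`‖D(f - Pf)‖²_{ℓ²_a} ≤ ‖Df‖²_{ℓ²_a}`. -/
theorem stmt8 (V E I : Type*) [Countable V] [Countable E]
    (ep em : E → V) (hne : ∀ e, ep e ≠ em e)
    (a : E → ℝ) (ha : ∀ e, 0 < a e) (d : V → ℝ) (hd : ∀ v, 0 < d v)
    (cell : V → I)
    (halmost : ∀ i j : I, i ≠ j → ∃ c : ℝ, 0 ≤ c ∧ ∀ v : V, cell v = i →
      (∑' e : {e : E // (ep e = v ∧ cell (em e) = j) ∨ (em e = v ∧ cell (ep e) = j)}, a e.1)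
        = c * d v)
    (hcellfin : ∀ i : I, Summable (fun v : {v : V // cell v = i} => d v.1))
    (hedgefin : ∀ i j : I,
      Summable (fun e : {e : E // cell (ep e) = i ∧ cell (em e) = j} => a e.1))
    (f : V → ℝ) (hf2 : Summable (fun v => d v * (f v) ^ 2))
    (hfE : Summable (fun e => a e * (f (ep e) - f (em e)) ^ 2)) :
    let P : V → ℝ := fun v =>
      (∑' w : {w : V // cell w = cell v}, f w.1 * d w.1) /
        (∑' w : {w : V // cell w = cell v}, d w.1)
    ∑' e : E, ENNReal.ofReal
        (a e * ((f (ep e) - P (ep e)) - (f (em e) - P (em e))) ^ 2)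
      ≤ ∑' e : E, ENNReal.ofReal (a e * (f (ep e) - f (em e)) ^ 2) :=
  stmt8_general V E I ep em a ha d hd cell halmost hcellfin hedgefin f hf2 hfE
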